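/- Let A be an n × N real matrix with operator norm ‖A‖ ≤ 3√N, let ε ∈ (0,1), δ > 0, and let 𝒩 be an ε-net of δ√N B₁^N (in ℓ₂ distance) such that every y ∈ 𝒩 satisfies ‖Ay‖₂ ≥ 6ε√N ‖y‖₂. Then every x ∈ Ker A with ‖x‖₂ = 1 satisfies ‖x‖₁ ≥ δ√N. -/

import Mathlib

open Matrix

/-- The `ℓ₁` norm on `ℝ^N`. -/
def l1Norm {N : ℕ} (x : Fin N → ℝ) : ℝ := ∑ i, |x i|

/-- The `ℓ₂` norm on `ℝ^N`. -/
noncomputable def l2Norm {N : ℕ} (x : Fin N → ℝ) : ℝ :=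
  Real.sqrt (∑ i, x i ^ 2)

/-- The `ℓ₂ → ℓ₂` operator norm of an `n × N` real matrix. -/
noncomputable def matrixOpNorm {n N : ℕ} (V : Matrix (Fin n) (Fin N) ℝ) : ℝ :=
  ‖LinearMap.toContinuousLinearMap (Matrix.toEuclideanLin V)‖

/-!
A point `x` of the kernel with `‖x‖₂ = 1` and `‖x‖₁ < δ√N` lies in `δ√N B₁^N`, so some net point
`y` has `‖x - y‖₂ ≤ ε`. Then `‖y‖₂ ≥ 1 - ε`, while `Ay = A(y - x)` gives `‖Ay‖₂ ≤ 3ε√N`; the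
hypothesis on the net forces `6ε(1 - ε)√N ≤ 3ε√N`, impossible for `ε < 1/2`.
-/

lemma l2Norm_eq_norm_toLp {N : ℕ} (x : Fin N → ℝ) : l2Norm x = ‖WithLp.toLp 2 x‖ := by
  simp only [EuclideanSpace.norm_eq, Real.norm_eq_abs, sq_abs, l2Norm]

lemma l2Norm_nonneg {N : ℕ} (x : Fin N → ℝ) : 0 ≤ l2Norm x :=
  Real.sqrt_nonneg _

lemma l2Norm_sub_l2Norm_le {N : ℕ} (x y : Fin N → ℝ) : l2Norm x - l2Norm y ≤ l2Norm (x - y) := by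
  simp only [l2Norm_eq_norm_toLp, WithLp.toLp_sub]
  exact norm_sub_norm_le _ _

lemma l2Norm_mulVec_le {n N : ℕ} (A : Matrix (Fin n) (Fin N) ℝ) (v : Fin N → ℝ) :
    l2Norm (A *ᵥ v) ≤ matrixOpNorm A * l2Norm v := by
  simp only [l2Norm_eq_norm_toLp]
  exact (LinearMap.toContinuousLinearMap (Matrix.toEuclideanLin A)).le_opNorm (WithLp.toLp 2 v)

lemma l2Norm_mulVec_le_of_mulVec_eq_zero {n N : ℕ} {A : Matrix (Fin n) (Fin N) ℝ}
    {x : Fin N → ℝ} (hx : A *ᵥ x = 0) (y : Fin N → ℝ) :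
    l2Norm (A *ᵥ y) ≤ matrixOpNorm A * l2Norm (x - y) := by
  have hAy : A *ᵥ y = -(A *ᵥ (x - y)) := by
    rw [Matrix.mulVec_sub, hx, zero_sub, neg_neg]
  rw [hAy, l2Norm_eq_norm_toLp, WithLp.toLp_neg, norm_neg, ← l2Norm_eq_norm_toLp]
  exact l2Norm_mulVec_le A (x - y)

theorem kernel_l1_lower_bound_of_net_general
    {n N : ℕ} (hN : 1 ≤ N) (A : Matrix (Fin n) (Fin N) ℝ)
    (ε δ : ℝ) (hε0 : 0 < ε) (hε : ε < 1/2)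
    (hA : matrixOpNorm A ≤ 3 * Real.sqrt N)
    (𝒩 : Finset (Fin N → ℝ))
    (hnet : ∀ x : Fin N → ℝ, l1Norm x ≤ δ * Real.sqrt N →
      ∃ y ∈ 𝒩, l2Norm (x - y) ≤ ε)
    (hAy : ∀ y ∈ 𝒩, 6 * ε * Real.sqrt N * l2Norm y ≤ l2Norm (A.mulVec y)) :
    ∀ x : Fin N → ℝ, A.mulVec x = 0 → l2Norm x = 1 →
      δ * Real.sqrt N ≤ l1Norm x := by
  intro x hker hx
  by_contra! hsmall
  obtain ⟨y, hy𝒩, hxy⟩ := hnet x hsmall.le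
  have hsqrtN : 0 < Real.sqrt N := Real.sqrt_pos.2 (by exact_mod_cast hN)
  have hy : 1 - ε ≤ l2Norm y := by linarith [l2Norm_sub_l2Norm_le x y]
  have hupper : l2Norm (A *ᵥ y) ≤ 3 * Real.sqrt N * ε :=
    (l2Norm_mulVec_le_of_mulVec_eq_zero hker y).trans
      (mul_le_mul hA hxy (l2Norm_nonneg _) (by positivity))
  have hlower : 6 * ε * Real.sqrt N * (1 - ε) ≤ l2Norm (A *ᵥ y) :=
    (mul_le_mul_of_nonneg_left hy (by positivity)).trans (hAy y hy𝒩)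
  nlinarith [mul_pos hε0 hsqrtN]

/-- Let `A` be an `n × N` real matrix with `‖A‖ ≤ 3√N`, let `0 < ε < 1/2`,
`δ > 0`, and let `𝒩` be an `ε`-net (in `ℓ₂` distance) of `δ√N B₁^N` such that
every `y ∈ 𝒩` satisfies `‖Ay‖₂ ≥ 6ε√N ‖y‖₂`. Then every `x ∈ Ker A` with
`‖x‖₂ = 1` satisfies `‖x‖₁ ≥ δ√N`. -/
theorem kernel_l1_lower_bound_of_net
    {n N : ℕ} (hN : 1 ≤ N) (A : Matrix (Fin n) (Fin N) ℝ)
    (ε δ : ℝ) (hε0 : 0 < ε) (hε : ε < 1/2) (hδ : 0 < δ)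
    (hA : matrixOpNorm A ≤ 3 * Real.sqrt N)
    (𝒩 : Finset (Fin N → ℝ))
    (h𝒩sub : ∀ y ∈ 𝒩, l1Norm y ≤ δ * Real.sqrt N)
    (hnet : ∀ x : Fin N → ℝ, l1Norm x ≤ δ * Real.sqrt N →
      ∃ y ∈ 𝒩, l2Norm (x - y) ≤ ε)
    (hAy : ∀ y ∈ 𝒩, 6 * ε * Real.sqrt N * l2Norm y ≤ l2Norm (A.mulVec y)) :
    ∀ x : Fin N → ℝ, A.mulVec x = 0 → l2Norm x = 1 →
      δ * Real.sqrt N ≤ l1Norm x :=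
  kernel_l1_lower_bound_of_net_general hN A ε δ hε0 hε hA 𝒩 hnet hAy
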